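/- Let ε > 0, let (π_{A,i})_{i≥1} be a sequence in (0,1), and let (μ_{A,i})_{i≥1} satisfy μ_{A,i} > ε for all i. For η > 0 define h_i(η) = (1/μ_{A,i})·log(η/π_{A,i}) + μ_{A,i}/2. Assume there exists a sequence (b_i)_{i≥1} with b_i > 1, Σ_{i=1}^∞ 1/b_i < ∞, and √(log b_i)/h_i(1) → 0 as i → ∞. Then for every η > 0 the series S(η) = Σ_{i=1}^∞ Φ(−h_i(η)) converges, η ↦ S(η) is a continuous decreasing bijection from (0,∞) onto (0,∞), and consequently for every α ∈ (0,1) there exists η* > 0 such that Σ_{i=1}^∞ Φ(−h_i(η*)) = α. -/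

import Mathlib

/-!
Since `h_i(η) = h_i(1) + log η / μ_{A,i}` with `μ_{A,i} > ε`, the condition `√(log b_i) = o(h_i(1))`
gives `h_i(η) ≥ 2 √(log b_i)` for large `i`, and the Chernoff bound `Φ(-x) ≤ exp(-x²/2)` then
dominates the `i`-th term by `1/b_i`. Every term is continuous and strictly decreasing in `η`, so
the series, dominated on `[η₀, ∞)` by its value at `η₀`, is continuous and strictly decreasing;
termwise it tends to `0` as `η → ∞`, and it is unbounded as `η → 0⁺` because every term tends to
`1`. The intermediate value theorem gives the bijection onto `(0, ∞)`.
-/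

open MeasureTheory ProbabilityTheory Filter

/-- The standard normal CDF `Φ`. -/
noncomputable def stdNormalCDF (x : ℝ) : ℝ :=
  (ProbabilityTheory.gaussianReal 0 1 (Set.Iic x)).toReal

open Set Real Topology

lemma stdNormalCDF_eq_cdf : stdNormalCDF = cdf (gaussianReal 0 1) := by
  ext x; rw [cdf_eq_real, measureReal_def]; rfl

lemma stdNormalCDF_nonneg (x : ℝ) : 0 ≤ stdNormalCDF x := ENNReal.toReal_nonneg

lemma tendsto_stdNormalCDF_atTop : Tendsto stdNormalCDF atTop (𝓝 1) :=
  stdNormalCDF_eq_cdf ▸ tendsto_cdf_atTop _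

lemma tendsto_stdNormalCDF_atBot : Tendsto stdNormalCDF atBot (𝓝 0) :=
  stdNormalCDF_eq_cdf ▸ tendsto_cdf_atBot _

lemma stdNormalCDF_sub_stdNormalCDF (a c : ℝ) :
    stdNormalCDF c - stdNormalCDF a = ∫ t in a..c, gaussianPDFReal 0 1 t := by
  simp only [stdNormalCDF, gaussianReal_apply_eq_integral 0 one_ne_zero,
    ENNReal.toReal_ofReal (integral_nonneg fun t => gaussianPDFReal_nonneg 0 1 t)]
  exact intervalIntegral.integral_Iic_sub_Iic (integrable_gaussianPDFReal 0 1).integrableOn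
    (integrable_gaussianPDFReal 0 1).integrableOn

lemma strictMono_stdNormalCDF : StrictMono stdNormalCDF := fun a c hac => by
  have := intervalIntegral.intervalIntegral_pos_of_pos
    (integrable_gaussianPDFReal 0 1).intervalIntegrable
    (fun t => gaussianPDFReal_pos 0 1 t one_ne_zero) hac
  linarith [stdNormalCDF_sub_stdNormalCDF a c]

lemma continuous_stdNormalCDF : Continuous stdNormalCDF := by
  have : stdNormalCDF = fun x => stdNormalCDF 0 + ∫ t in (0 : ℝ)..x, gaussianPDFReal 0 1 t := by
    ext x; linarith [stdNormalCDF_sub_stdNormalCDF 0 x]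
  rw [this]
  exact continuous_const.add ((integrable_gaussianPDFReal 0 1).continuous_primitive 0)

lemma stdNormalCDF_pos (x : ℝ) : 0 < stdNormalCDF x :=
  (stdNormalCDF_nonneg (x - 1)).trans_lt (strictMono_stdNormalCDF (sub_one_lt x))

lemma stdNormalCDF_neg_le_exp {x : ℝ} (hx : 0 ≤ x) :
    stdNormalCDF (-x) ≤ exp (-x ^ 2 / 2) := by
  have := measure_le_le_exp_mul_mgf (X := id) (μ := gaussianReal 0 1) (-x) (neg_nonpos.2 hx)
    (integrable_exp_mul_gaussianReal (-x))
  rw [mgf_id_gaussianReal, ← exp_add] at this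
  convert this using 2
  · rw [stdNormalCDF, measureReal_def]; rfl
  · push_cast; ring

lemma tendsto_tsum_atTop_of_tendsto_pos {α : Type*} {l : Filter α} {u : ℕ → α → ℝ} {c : ℝ}
    (hc : 0 < c) (hnonneg : ∀ i x, 0 ≤ u i x) (hsum : ∀ᶠ x in l, Summable (u · x))
    (hlim : ∀ i, Tendsto (u i) l (𝓝 c)) : Tendsto (fun x => ∑' i, u i x) l atTop := by
  refine tendsto_atTop.2 fun y => ?_
  obtain ⟨N, hN⟩ := exists_nat_gt (y / c)
  have hpartial : Tendsto (fun x => ∑ i ∈ Finset.range N, u i x) l (𝓝 (N * c)) := by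
    simpa using tendsto_finsetSum (Finset.range N) fun i _ => hlim i
  filter_upwards [hpartial.eventually_const_lt ((div_lt_iff₀ hc).1 hN), hsum] with x hx hxsum
  exact hx.le.trans (hxsum.sum_le_tsum _ fun i _ => hnonneg i x)

section Antitone

variable {u : ℕ → ℝ → ℝ} {a : ℝ}

lemma continuousOn_tsum_of_antitoneOn (hcont : ∀ i, ContinuousOn (u i) (Ioi a))
    (hanti : ∀ i, AntitoneOn (u i) (Ioi a)) (hnonneg : ∀ i x, 0 ≤ u i x)
    (hsum : ∀ x > a, Summable (u · x)) : ContinuousOn (fun x => ∑' i, u i x) (Ioi a) := by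
  intro x hx
  obtain ⟨y, hay, hyx⟩ := exists_between (α := ℝ) hx
  have hy : ContinuousOn (fun x => ∑' i, u i x) (Ici y) :=
    continuousOn_tsum (fun i => (hcont i).mono (Ici_subset_Ioi.2 hay)) (hsum y hay)
      fun i z hz => by
        rw [norm_of_nonneg (hnonneg i z)]
        exact hanti i hay (hay.trans_le hz) hz
  exact ((hy x hyx.le).continuousAt (Ici_mem_nhds hyx)).continuousWithinAt

lemma strictAntiOn_tsum (hanti : ∀ i, StrictAntiOn (u i) (Ioi a)) (hnonneg : ∀ i x, 0 ≤ u i x)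
    (hsum : ∀ x > a, Summable (u · x)) : StrictAntiOn (fun x => ∑' i, u i x) (Ioi a) :=
  fun x hx y hy hxy => Summable.tsum_lt_tsum_of_nonneg (i := 0) (fun i => hnonneg i y)
    (fun i => (hanti i).antitoneOn hx hy hxy.le) (hanti 0 hx hy hxy) (hsum x hx)

lemma tendsto_tsum_atTop_zero_of_antitoneOn (hanti : ∀ i, AntitoneOn (u i) (Ioi a))
    (hnonneg : ∀ i x, 0 ≤ u i x) (hsum : ∀ x > a, Summable (u · x))
    (hlim : ∀ i, Tendsto (u i) atTop (𝓝 0)) :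
    Tendsto (fun x => ∑' i, u i x) atTop (𝓝 0) := by
  have ha : a < a + 1 := lt_add_one a
  have hbound : ∀ᶠ x in atTop, ∀ i, ‖u i x‖ ≤ u i (a + 1) := by
    filter_upwards [eventually_ge_atTop (a + 1)] with x hx i
    rw [norm_of_nonneg (hnonneg i x)]
    exact hanti i ha (ha.trans_le hx) hx
  simpa using tendsto_tsum_of_dominated_convergence (hsum _ ha) hlim hbound

end Antitone

lemma image_Ioi_eq_Ioi_of_tendsto {f : ℝ → ℝ} {a : ℝ} (hf : ContinuousOn f (Ioi a))
    (hpos : ∀ x > a, 0 < f x) (hright : Tendsto f (𝓝[>] a) atTop)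
    (hleft : Tendsto f atTop (𝓝 0)) : f '' Ioi a = Ioi 0 := by
  refine (image_subset_iff.2 hpos).antisymm fun y (hy : 0 < y) => ?_
  obtain ⟨x₁, hx₁, hax₁⟩ := ((hright.eventually_gt_atTop y).and self_mem_nhdsWithin).exists
  obtain ⟨x₂, hx₂, hax₂⟩ := ((hleft.eventually_lt_const hy).and (eventually_gt_atTop a)).exists
  exact (isPreconnected_Ioi.image f hf).Icc_subset (mem_image_of_mem f hax₂)
    (mem_image_of_mem f hax₁) ⟨hx₂.le, hx₁.le⟩

section Threshold

variable {a p c : ℝ}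

lemma continuousOn_stdNormalCDF_neg_mul_log_div_add (hp : p ≠ 0) :
    ContinuousOn (fun η => stdNormalCDF (-(a * log (η / p) + c))) (Ioi 0) :=
  continuous_stdNormalCDF.comp_continuousOn <| ((continuousOn_const.mul
    ((continuousOn_id.div_const p).log fun η (hη : 0 < η) => div_ne_zero hη.ne' hp)).add
    continuousOn_const).neg

lemma strictAntiOn_stdNormalCDF_neg_mul_log_div_add (ha : 0 < a) (hp : 0 < p) :
    StrictAntiOn (fun η => stdNormalCDF (-(a * log (η / p) + c))) (Ioi 0) :=
  strictMono_stdNormalCDF.comp_strictAntiOn fun x (hx : 0 < x) y _ hxy => by gcongr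

lemma tendsto_stdNormalCDF_neg_mul_log_div_add_atTop (ha : 0 < a) (hp : 0 < p) :
    Tendsto (fun η => stdNormalCDF (-(a * log (η / p) + c))) atTop (𝓝 0) :=
  tendsto_stdNormalCDF_atBot.comp <| tendsto_neg_atTop_atBot.comp <|
    tendsto_atTop_add_const_right _ c <|
      (tendsto_log_atTop.comp (tendsto_id.atTop_div_const hp)).const_mul_atTop ha

lemma tendsto_stdNormalCDF_neg_mul_log_div_add_nhdsGT_zero (ha : 0 < a) (hp : 0 < p) :
    Tendsto (fun η => stdNormalCDF (-(a * log (η / p) + c))) (𝓝[>] 0) (𝓝 1) := by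
  have hdiv : Tendsto (· / p) (𝓝[>] 0) (𝓝[>] 0) :=
    tendsto_nhdsWithin_of_tendsto_nhds_of_eventually_within _
      (((continuous_id.div_const p).tendsto' 0 0 (zero_div p)).mono_left nhdsWithin_le_nhds)
      (eventually_mem_nhdsWithin.mono fun η (hη : 0 < η) => div_pos hη hp)
  exact tendsto_stdNormalCDF_atTop.comp <| tendsto_neg_atBot_atTop.comp <|
    tendsto_atBot_add_const_right _ c <| (tendsto_log_nhdsGT_zero.comp hdiv).const_mul_atBot ha

end Threshold

lemma tendsto_atTop_of_summable_one_div {b : ℕ → ℝ} (hb : ∀ i, 0 < b i)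
    (hsum : Summable (1 / b ·)) : Tendsto b atTop atTop := by
  have : Tendsto (fun i => (b i)⁻¹) atTop (𝓝[>] 0) :=
    tendsto_nhdsWithin_iff.2 ⟨by simpa only [one_div] using hsum.tendsto_atTop_zero,
      .of_forall fun i => inv_pos.2 (hb i)⟩
  simpa only [Pi.inv_def, inv_inv] using this.inv_tendsto_nhdsGT_zero

lemma summable_stdNormalCDF_neg_add {b c d : ℕ → ℝ} {D : ℝ} (hb : ∀ i, 0 < b i)
    (hbsum : Summable (1 / b ·)) (hc : ∀ i, 0 < c i)
    (hlim : Tendsto (fun i => √(log (b i)) / c i) atTop (𝓝 0)) (hd : ∀ i, |d i| ≤ D) :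
    Summable fun i => stdNormalCDF (-(c i + d i)) := by
  have hbtop := tendsto_atTop_of_summable_one_div hb hbsum
  refine hbsum.of_norm_bounded_eventually ?_
  rw [Nat.cofinite_eq_atTop]
  filter_upwards [hlim.eventually_lt_const (by norm_num : (0 : ℝ) < 1 / 3),
    (tendsto_sqrt_atTop.comp (tendsto_log_atTop.comp hbtop)).eventually_ge_atTop D,
    hbtop.eventually_ge_atTop 1] with i hratio hD hb1
  have hL : 0 ≤ log (b i) := log_nonneg hb1
  have hratio : 3 * √(log (b i)) < c i := by
    rw [div_lt_iff₀ (hc i)] at hratio; linarith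
  have hcd : 2 * √(log (b i)) ≤ c i + d i := by
    linarith [neg_abs_le (d i), hd i, show D ≤ √(log (b i)) from hD]
  have hsq : 4 * log (b i) ≤ (c i + d i) ^ 2 := by
    nlinarith [sq_sqrt hL, sqrt_nonneg (log (b i))]
  calc ‖stdNormalCDF (-(c i + d i))‖ = stdNormalCDF (-(c i + d i)) :=
        norm_of_nonneg (stdNormalCDF_nonneg _)
    _ ≤ exp (-(c i + d i) ^ 2 / 2) :=
        stdNormalCDF_neg_le_exp (by linarith [sqrt_nonneg (log (b i))])
    _ ≤ exp (-log (b i)) := exp_le_exp.2 (by linarith)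
    _ = 1 / b i := by rw [exp_neg, exp_log (hb i), one_div]

lemma summable_stdNormalCDF_neg_threshold {ε : ℝ} (hε : 0 < ε) {p m b : ℕ → ℝ}
    (hp : ∀ i, p i ∈ Ioo 0 1) (hm : ∀ i, ε < m i) (hb : ∀ i, 0 < b i)
    (hbsum : Summable (1 / b ·))
    (hlim : Tendsto (fun i => √(log (b i)) / (1 / m i * log (1 / p i) + m i / 2)) atTop (𝓝 0))
    {η : ℝ} (hη : 0 < η) :
    Summable fun i => stdNormalCDF (-(1 / m i * log (η / p i) + m i / 2)) := by
  have hm₀ (i : ℕ) : 0 < m i := hε.trans (hm i)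
  have hc (i : ℕ) : 0 < 1 / m i * log (1 / p i) + m i / 2 := by
    have := log_pos (one_lt_one_div (hp i).1 (hp i).2)
    have := hm₀ i
    positivity
  have hd (i : ℕ) : |log η / m i| ≤ |log η| / ε := by
    rw [abs_div, abs_of_pos (hm₀ i)]
    exact div_le_div_of_nonneg_left (abs_nonneg _) hε (hm i).le
  convert summable_stdNormalCDF_neg_add hb hbsum hc hlim hd using 4 with i
  rw [log_div hη.ne' (hp i).1.ne', log_div one_ne_zero (hp i).1.ne', log_one]
  ring

/-- **Existence of the normalizing constant for the optimal Alpha-Spending allocation with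
varying signal strengths and densities.** With `h_i(η) = (1/μ_{A,i}) log(η/π_{A,i}) + μ_{A,i}/2`,
if there is a sequence `b_i > 1` with `∑ 1/b_i < ∞` and `√(log b_i)/h_i(1) → 0`, then for
every `η > 0` the series `S(η) = ∑_i Φ(−h_i(η))` converges, `S` is a continuous decreasing
bijection from `(0,∞)` onto `(0,∞)`, and for every `α ∈ (0,1)` there is `η* > 0` with
`S(η*) = α`. -/
theorem exists_normalizing_constant_varying_signals
    (ε : ℝ) (hε : 0 < ε)
    (πA μA : ℕ → ℝ) (hπA : ∀ i, πA i ∈ Set.Ioo (0 : ℝ) 1) (hμA : ∀ i, ε < μA i)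
    (h : ℝ → ℕ → ℝ)
    (hh : ∀ η i, h η i = (1 / μA i) * Real.log (η / πA i) + μA i / 2)
    (b : ℕ → ℝ) (hb : ∀ i, 1 < b i) (hbsum : Summable (fun i => 1 / b i))
    (hblim : Tendsto (fun i => Real.sqrt (Real.log (b i)) / h 1 i) atTop (nhds 0))
    (S : ℝ → ℝ) (hS : ∀ η, S η = ∑' i : ℕ, stdNormalCDF (-(h η i))) :
    (∀ η > (0 : ℝ), Summable (fun i : ℕ => stdNormalCDF (-(h η i)))) ∧
      ContinuousOn S (Set.Ioi 0) ∧
      StrictAntiOn S (Set.Ioi 0) ∧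
      S '' Set.Ioi 0 = Set.Ioi 0 ∧
      ∀ α ∈ Set.Ioo (0 : ℝ) 1, ∃ ηstar > (0 : ℝ), S ηstar = α := by
  obtain rfl : h = fun η i => 1 / μA i * log (η / πA i) + μA i / 2 := funext fun η => funext (hh η)
  obtain rfl : S = fun η => ∑' i, stdNormalCDF (-(1 / μA i * log (η / πA i) + μA i / 2)) :=
    funext hS
  have hμ (i : ℕ) : 0 < 1 / μA i := one_div_pos.2 (hε.trans (hμA i))
  have hnonneg (i : ℕ) (η : ℝ) := stdNormalCDF_nonneg (-(1 / μA i * log (η / πA i) + μA i / 2))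
  have hsum (η : ℝ) (hη : η > 0) := summable_stdNormalCDF_neg_threshold hε hπA hμA
    (fun i => one_pos.trans (hb i)) hbsum hblim hη
  have hanti (i : ℕ) :=
    strictAntiOn_stdNormalCDF_neg_mul_log_div_add (c := μA i / 2) (hμ i) (hπA i).1
  have hcont := continuousOn_tsum_of_antitoneOn
    (fun i => continuousOn_stdNormalCDF_neg_mul_log_div_add (hπA i).1.ne')
    (fun i => (hanti i).antitoneOn) hnonneg hsum
  have himage := image_Ioi_eq_Ioi_of_tendsto hcont
    (fun η hη => (hsum η hη).tsum_pos (hnonneg · η) 0 (stdNormalCDF_pos _))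
    (tendsto_tsum_atTop_of_tendsto_pos one_pos hnonneg (eventually_mem_nhdsWithin.mono hsum)
      fun i => tendsto_stdNormalCDF_neg_mul_log_div_add_nhdsGT_zero (hμ i) (hπA i).1)
    (tendsto_tsum_atTop_zero_of_antitoneOn (fun i => (hanti i).antitoneOn) hnonneg hsum
      fun i => tendsto_stdNormalCDF_neg_mul_log_div_add_atTop (hμ i) (hπA i).1)
  exact ⟨hsum, hcont, strictAntiOn_tsum hanti hnonneg hsum, himage,
    fun α hα => himage.symm.subset hα.1⟩
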